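/- arXiv:1309.1530 — 3 statements merged into one kernel-verified Lean document; each statement's English description precedes it below -/
import Mathlib

section
/- For integers m > n ≥ 0, the formal series identity (x₁ - x₂)^m · (∂/∂x₂)^n (x₂⁻¹ δ(x₁/x₂)) = 0 holds in ℂ[[x₁^{±1}, x₂^{±1}]]. -/
noncomputable section

open Polynomial Finset

lemma fwdDiff_poly : ∀ (m : ℕ) (p : ℂ[X]), p.degree < m →
    ∀ y : ℤ, (fwdDiff (1:ℤ))^[m] (fun t : ℤ => p.eval (t : ℂ)) y = 0 := by
  intro m
  induction m with
  | zero =>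
    intro p hp y
    have h0 : p = 0 := by
      rw [← degree_eq_bot]
      simpa using hp
    simp [h0]
  | succ m ih =>
    intro p hp y
    rw [Function.iterate_succ_apply]
    set q : ℂ[X] := p.comp (X + C 1) - p with hq
    have hdf : fwdDiff (1:ℤ) (fun t : ℤ => p.eval (t : ℂ)) = fun t : ℤ => q.eval (t : ℂ) := by
      funext t
      simp only [fwdDiff, hq, eval_sub, eval_comp, eval_add, eval_X, eval_C]
      push_cast
      ring
    rw [hdf]
    apply ih
    rcases eq_or_ne p 0 with rfl | hp0
    · have : q = 0 := by simp [hq]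
      rw [this, degree_zero]
      exact bot_lt_iff_ne_bot.mpr (by simp)
    · have hlc : (p.comp (X + C 1)).leadingCoeff = p.leadingCoeff := by
        have := leadingCoeff_comp (q := X + C (1:ℂ)) (p := p) (by rw [natDegree_X_add_C]; exact one_ne_zero)
        simpa only [leadingCoeff_X_add_C, one_pow, mul_one] using this
      have hnd : (p.comp (X + C 1)).natDegree = p.natDegree := by
        have := natDegree_taylor p (1 : ℂ)
        simpa [taylor_apply] using this
      have hc0 : p.comp (X + C 1) ≠ 0 := by
        intro hzero
        rw [hzero, leadingCoeff_zero] at hlc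
        exact hp0 (leadingCoeff_eq_zero.mp hlc.symm)
      have hdeq : (p.comp (X + C 1)).degree = p.degree := by
        rw [degree_eq_natDegree hp0, degree_eq_natDegree hc0, hnd]
      have hQdeg : q.degree < p.degree := by
        rw [hq]
        have h2 := degree_sub_lt hdeq hc0 hlc
        rwa [hdeq] at h2
      calc q.degree < p.degree := hQdeg
        _ ≤ m := by
          rw [← Polynomial.natDegree_le_iff_degree_le]
          have h3 := (Polynomial.natDegree_lt_iff_degree_lt hp0).mpr hp
          omega

lemma alt_sum_choose (m : ℕ) (p : ℂ[X]) (hp : p.degree < m) :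
    ∑ t ∈ Finset.range (m + 1), (m.choose t : ℂ) * (-1) ^ t * p.eval (t : ℂ) = 0 := by
  have h0 := fwdDiff_poly m p hp 0
  rw [fwdDiff_iter_eq_sum_shift] at h0
  have h1 : ((-1 : ℂ) ^ m) *
      ∑ t ∈ Finset.range (m + 1), (m.choose t : ℂ) * (-1) ^ t * p.eval (t : ℂ) = 0 := by
    rw [Finset.mul_sum, ← h0]
    apply Finset.sum_congr rfl
    intro t ht
    have htm : t ≤ m := Nat.lt_succ_iff.mp (Finset.mem_range.mp ht)
    have hmt : ((-1 : ℂ)) ^ (m - t) * (-1) ^ t = (-1) ^ m := by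
      rw [← pow_add, Nat.sub_add_cancel htm]
    have hsq : ((-1 : ℂ)) ^ t * (-1) ^ t = 1 := by
      rw [← pow_add]; exact Even.neg_one_pow ⟨t, rfl⟩
    simp only [zsmul_eq_mul, smul_eq_mul, nsmul_eq_mul, mul_one, zero_add]
    push_cast
    rw [← hmt]
    linear_combination ((-1 : ℂ) ^ (m - t) * (m.choose t : ℂ) * p.eval (t : ℂ)) * hsq
  exact (mul_eq_zero.mp h1).resolve_left (pow_ne_zero m (by norm_num))


/-- Coefficient of `x₁^i x₂^j` in `x₂⁻¹ δ(x₁/x₂) = Σ_{k∈ℤ} x₁^k x₂^{-k-1}`. -/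
def delta2 : ℤ → ℤ → ℂ := fun i j => if j = -i - 1 then 1 else 0

/-- The formal partial derivative `∂/∂x₂`, acting coefficientwise on a doubly
infinite series in `x₁, x₂` given by its coefficient family. -/
def d2 (S : ℤ → ℤ → ℂ) : ℤ → ℤ → ℂ := fun i j => ((j + 1 : ℤ) : ℂ) * S i (j + 1)

/-- Multiplication of a coefficient family by `(x₁ - x₂)^m`, via the binomial expansion
`(x₁-x₂)^m = Σ_t C(m,t) (-1)^t x₁^{m-t} x₂^t`. -/
def mulXsub (m : ℕ) (S : ℤ → ℤ → ℂ) : ℤ → ℤ → ℂ :=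
  fun i j => ∑ t ∈ Finset.range (m + 1),
    (m.choose t : ℂ) * (-1) ^ t * S (i - ((m - t : ℕ) : ℤ)) (j - (t : ℤ))

lemma d2_iter (n : ℕ) (S : ℤ → ℤ → ℂ) (i j : ℤ) :
    (d2^[n] S) i j = (∏ k ∈ Finset.range n, ((j + (k : ℤ) + 1 : ℤ) : ℂ)) * S i (j + n) := by
  induction n generalizing S with
  | zero => simp
  | succ n ih =>
    rw [Function.iterate_succ_apply, ih (d2 S), Finset.prod_range_succ]
    simp only [d2]
    have e1 : j + ((n + 1 : ℕ) : ℤ) = j + (n : ℤ) + 1 := by push_cast; ring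
    rw [e1]
    ring

/-- for `m > n ≥ 0`, `(x₁-x₂)^m (∂/∂x₂)^n (x₂⁻¹ δ(x₁/x₂)) = 0`. -/
theorem stmt1 (m n : ℕ) (h : n < m) (i j : ℤ) :
    mulXsub m (d2^[n] delta2) i j = 0 := by
  unfold mulXsub
  by_cases hij : i + j = (m : ℤ) - 1 - n
  · -- sum of binomial alternating values of a degree-n polynomial
    set p : ℂ[X] := ∏ k ∈ Finset.range n, (C ((j : ℂ) + k + 1) - X) with hpdef
    have hpd : p.degree < (m : ℕ) := by
      have : p.degree = n := by
        rw [hpdef, degree_prod]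
        have : ∀ k ∈ Finset.range n, (C ((j : ℂ) + k + 1) - X).degree = 1 := by
          intro k _
          rw [show (C ((j : ℂ) + k + 1) - X) = -(X - C ((j : ℂ) + k + 1)) by ring,
            degree_neg, degree_X_sub_C]
        rw [Finset.sum_congr rfl this]
        simp
      rw [this]
      exact_mod_cast Nat.cast_lt.mpr h
    have key := alt_sum_choose m p hpd
    rw [← key]
    apply Finset.sum_congr rfl
    intro t ht
    have htm : t ≤ m := Nat.lt_succ_iff.mp (Finset.mem_range.mp ht)
    rw [d2_iter]
    have hdelta : delta2 (i - ((m - t : ℕ) : ℤ)) (j - t + n) = 1 := by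
      rw [delta2]
      rw [if_pos]
      rw [Nat.cast_sub htm]
      omega
    rw [hdelta, mul_one]
    congr 1
    rw [hpdef, eval_prod]
    apply Finset.prod_congr rfl
    intro k _
    simp only [eval_sub, eval_C, eval_X]
    push_cast
    ring
  · apply Finset.sum_eq_zero
    intro t ht
    have htm : t ≤ m := Nat.lt_succ_iff.mp (Finset.mem_range.mp ht)
    rw [d2_iter]
    have hdelta : delta2 (i - ((m - t : ℕ) : ℤ)) (j - t + n) = 0 := by
      rw [delta2, if_neg]
      rw [Nat.cast_sub htm]
      omega
    rw [hdelta, mul_zero, mul_zero]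
end
end

section
/- Let W be a vector space and define Ē(W,r), Ẽ(W,r), Ē₀(W,r) as below. Then Ē(W,r) = Ẽ(W,r) ⊕ Ē₀(W,r) as vector spaces. -/
noncomputable section

variable {W : Type*} [AddCommGroup W] [Module ℂ W] {r : ℕ}

/-- A formal series `α(x₀,x̄) ∈ (End W)[[x₀^{±1},…,x_r^{±1}]]`, encoded by its
coefficient family: `α n₀ nn` is the coefficient of `x₀^{-n₀-1} x̄^{-nn-1}`
(as a map `W → W`). -/
abbrev SeriesOp (W : Type*) (r : ℕ) := ℤ → (Fin r → ℤ) → W → W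

/-- `α ∈ E(W,r) = Hom(W, W[[x₁^{±1},…,x_r^{±1}]]((x₀)))`: for each `w`, the
series `α(x₀,x̄)w` is lower truncated in `x₀`. -/
def MemE (α : SeriesOp W r) : Prop :=
  ∀ w : W, ∃ N : ℤ, ∀ n₀ ≥ N, ∀ nn, α n₀ nn w = 0

/-- Multiplication of the series by the polynomial `p(x₀)`: the coefficient of
`x₀^{-t-1}` in `p(x₀)α(x₀,x̄)` is `Σ_k p_k α(t+k,·)`. -/
def pmul0 (p : Polynomial ℂ) (α : SeriesOp W r) : SeriesOp W r :=
  fun n₀ nn w => ∑ k ∈ Finset.range (p.natDegree + 1), p.coeff k • α (n₀ + k) nn w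

/-- Multiplication of the series by the polynomial `p(x_i)` for `1 ≤ i ≤ r`. -/
def pmuli (i : Fin r) (p : Polynomial ℂ) (α : SeriesOp W r) : SeriesOp W r :=
  fun n₀ nn w => ∑ k ∈ Finset.range (p.natDegree + 1),
    p.coeff k • α n₀ (Function.update nn i (nn i + k)) w

/-- A nonzero polynomial whose nonzero roots are multiplicity-free. -/
def MultFree (p : Polynomial ℂ) : Prop :=
  p ≠ 0 ∧ ∀ z : ℂ, z ≠ 0 → p.rootMultiplicity z ≤ 1

/-- `α ∈ Ē(W,r)`: there are nonzero polynomials `p₀,…,p_r`, the nonzero roots of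
`p_i` (`i ≥ 1`) multiplicity-free, with `p₀(x₀)α ∈ E(W,r)` and `p_i(x_i)α = 0` on `W`. -/
def MemEbar (α : SeriesOp W r) : Prop :=
  ∃ (p₀ : Polynomial ℂ) (p : Fin r → Polynomial ℂ),
    p₀ ≠ 0 ∧ (∀ i, MultFree (p i)) ∧ MemE (pmul0 p₀ α) ∧
      ∀ i n₀ nn w, pmuli i (p i) α n₀ nn w = 0

/-- `α ∈ Ẽ(W,r)`: `α ∈ E(W,r)` itself, and `p_i(x_i)α = 0` as above. -/
def MemEtilde (α : SeriesOp W r) : Prop :=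
  MemE α ∧ ∃ p : Fin r → Polynomial ℂ, (∀ i, MultFree (p i)) ∧
    ∀ i n₀ nn w, pmuli i (p i) α n₀ nn w = 0

/-- `α ∈ Ē₀(W,r)`: nonzero polynomials `p_i(x_i)` annihilate `α` on `W` for all
`0 ≤ i ≤ r`, nonzero roots of `p_i` (`i ≥ 1`) multiplicity-free. -/
def MemE0 (α : SeriesOp W r) : Prop :=
  ∃ (p₀ : Polynomial ℂ) (p : Fin r → Polynomial ℂ),
    p₀ ≠ 0 ∧ (∀ i, MultFree (p i)) ∧
      (∀ n₀ nn w, pmul0 p₀ α n₀ nn w = 0) ∧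
      ∀ i n₀ nn w, pmuli i (p i) α n₀ nn w = 0

/-- The projection `ψ` of `Ē(W,r)` onto `Ẽ(W,r)` computed with a polynomial `f`
(with `f(0) ≠ 0` and `f(x₀)α ∈ E(W,r)`):
`ψ(α)w = ι_{x₀;0}(f(x₀)⁻¹)(f(x₀)α(x₀,x̄)w)`, where `ι_{x₀;0}(f(x₀)⁻¹)` is the power
series expansion of `1/f` at `x₀ = 0`; coefficientwise
`ψ(α)(n₀,nn)w = Σᶠ_i c_i (f·α)(n₀+i,nn)w` with `c_i` the coefficients of the inverse
power series (a finite sum under the above hypotheses). -/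
def psi (f : Polynomial ℂ) (α : SeriesOp W r) : SeriesOp W r :=
  fun n₀ nn w => ∑ᶠ i : ℕ,
    (PowerSeries.coeff i ((f : PowerSeries ℂ)⁻¹)) • pmul0 f α (n₀ + i) nn w
/-- Auxiliary: action of a power series on a ℤ-indexed family. -/
def psum (h : PowerSeries ℂ) (g : ℤ → W) (n : ℤ) : W :=
  ∑ᶠ i : ℕ, (PowerSeries.coeff i h) • g (n + i)

lemma psum_eq_sum (h : PowerSeries ℂ) (g : ℤ → W) {N : ℤ}
    (hg : ∀ m ≥ N, g m = 0) (n : ℤ) {M : ℕ} (hM : (N - n).toNat ≤ M) :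
    psum h g n = ∑ i ∈ Finset.range M, (PowerSeries.coeff i h) • g (n + i) := by
  apply finsum_eq_sum_of_support_subset
  intro i hi
  simp only [Function.mem_support, ne_eq] at hi
  simp only [Finset.coe_range, Set.mem_Iio]
  by_contra hlt
  push_neg at hlt
  have : N ≤ n + i := by omega
  exact hi (by rw [hg _ this, smul_zero])

lemma psum_one (g : ℤ → W) (n : ℤ) : psum 1 g n = g n := by
  rw [psum, finsum_eq_single _ 0]
  · simp
  · intro i hi
    simp [PowerSeries.coeff_one, hi]

lemma psum_assoc (h₁ h₂ : PowerSeries ℂ) (g : ℤ → W) {N : ℤ}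
    (hg : ∀ m ≥ N, g m = 0) (n : ℤ) :
    psum h₁ (fun t => psum h₂ g t) n = psum (h₁ * h₂) g n := by
  set M : ℕ := (N - n).toNat + 1 with hMdef
  have hg' : ∀ m ≥ N, psum h₂ g m = 0 := by
    intro m hm
    rw [psum_eq_sum h₂ g hg m (M := (N - m).toNat) le_rfl]
    apply Finset.sum_eq_zero; intro i _
    rw [hg _ (by omega), smul_zero]
  rw [psum_eq_sum h₁ _ hg' n (M := M) (by omega),
      psum_eq_sum (h₁*h₂) g hg n (M := 2*M) (by omega)]
  have inner : ∀ i ∈ Finset.range M,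
      (PowerSeries.coeff i h₁) • psum h₂ g (n + i)
        = ∑ j ∈ Finset.range M,
            (PowerSeries.coeff i h₁ * PowerSeries.coeff j h₂) • g (n + i + j) := by
    intro i _
    rw [psum_eq_sum h₂ g hg (n + i) (M := M) (by omega), Finset.smul_sum]
    refine Finset.sum_congr rfl fun j _ => ?_
    rw [smul_smul, add_assoc]
  rw [Finset.sum_congr rfl inner, ← Finset.sum_product']
  have rhs : ∀ s ∈ Finset.range (2*M),
      (PowerSeries.coeff s (h₁*h₂)) • g (n + s)
        = ∑ p ∈ Finset.HasAntidiagonal.antidiagonal s,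
            (PowerSeries.coeff p.1 h₁ * PowerSeries.coeff p.2 h₂) • g (n + p.1 + p.2) := by
    intro s hs
    rw [PowerSeries.coeff_mul, Finset.sum_smul]
    refine Finset.sum_congr rfl fun p hp => ?_
    rw [Finset.HasAntidiagonal.mem_antidiagonal] at hp
    congr 1
    push_cast [← hp]
    ring
  rw [Finset.sum_congr rfl rhs, ← Finset.sum_biUnion]
  · apply Finset.sum_subset
    · intro p hp
      rw [Finset.mem_product, Finset.mem_range, Finset.mem_range] at hp
      rw [Finset.mem_biUnion]
      exact ⟨p.1 + p.2, Finset.mem_range.mpr (by omega),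
        Finset.HasAntidiagonal.mem_antidiagonal.mpr rfl⟩
    · intro p hpB hpA
      rw [Finset.mem_product, Finset.mem_range, Finset.mem_range] at hpA
      push_neg at hpA
      have hM2 : M ≤ p.1 + p.2 := by
        by_cases h1 : p.1 < M
        · exact le_trans (hpA h1) (Nat.le_add_left _ _)
        · omega
      have : g (n + p.1 + p.2) = 0 := by
        apply hg; push_cast; omega
      rw [this, smul_zero]
  · intro s₁ _ s₂ _ hne
    simp only [Function.onFun]
    rw [Finset.disjoint_left]
    intro p hp1 hp2
    rw [Finset.HasAntidiagonal.mem_antidiagonal] at hp1 hp2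
    exact hne (hp1 ▸ hp2 ▸ rfl)

lemma pmul0_eq_psum (p : Polynomial ℂ) (α : SeriesOp W r) (n : ℤ) (nn : Fin r → ℤ) (w : W) :
    pmul0 p α n nn w = psum (↑p : PowerSeries ℂ) (fun j => α j nn w) n := by
  rw [psum, finsum_eq_sum_of_support_subset _ (s := Finset.range (p.natDegree + 1))]
  · exact Finset.sum_congr rfl fun k _ => by rw [Polynomial.coeff_coe]
  · intro i hi
    simp only [Function.mem_support, ne_eq] at hi
    simp only [Finset.coe_range, Set.mem_Iio]
    by_contra hlt
    push_neg at hlt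
    rw [Polynomial.coeff_coe, Polynomial.coeff_eq_zero_of_natDegree_lt (by omega),
      zero_smul] at hi
    exact hi rfl

/-- `pmuli` and `pmul0` commute. -/
lemma pmuli_pmul0 (i : Fin r) (q f : Polynomial ℂ) (α : SeriesOp W r)
    (n : ℤ) (nn : Fin r → ℤ) (w : W) :
    pmuli i q (pmul0 f α) n nn w = pmul0 f (pmuli i q α) n nn w := by
  simp only [pmuli, pmul0, Finset.smul_sum]
  rw [Finset.sum_comm]
  exact Finset.sum_congr rfl fun k _ => Finset.sum_congr rfl fun l _ => smul_comm _ _ _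

/-- Multiplying by `X^m * f` is multiplying by `f` then shifting. -/
lemma pmul0_Xpow_mul (m : ℕ) (f : Polynomial ℂ) (hf : f ≠ 0) (α : SeriesOp W r)
    (n : ℤ) (nn : Fin r → ℤ) (w : W) :
    pmul0 (Polynomial.X ^ m * f) α n nn w = pmul0 f α (n + m) nn w := by
  have hXm : (Polynomial.X : Polynomial ℂ) ^ m ≠ 0 := pow_ne_zero _ Polynomial.X_ne_zero
  have hdeg : (Polynomial.X ^ m * f).natDegree = m + f.natDegree := by
    rw [Polynomial.natDegree_mul hXm hf, Polynomial.natDegree_X_pow]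
  have hcoeff : ∀ k : ℕ, (Polynomial.X ^ m * f).coeff k
      = if m ≤ k then f.coeff (k - m) else 0 := by
    intro k
    rw [mul_comm,
      Polynomial.coeff_mul_X_pow']
  rw [pmul0, pmul0, hdeg]
  rw [show m + f.natDegree + 1 = m + (f.natDegree + 1) by ring]
  rw [Finset.range_add, Finset.sum_union (Finset.disjoint_left.mpr (by
    intro a ha hb
    rw [Finset.mem_range] at ha
    rw [Finset.mem_map] at hb
    obtain ⟨b, _, hb⟩ := hb
    simp only [addLeftEmbedding_apply] at hb
    omega))]
  have h1 : ∑ k ∈ Finset.range m, (Polynomial.X ^ m * f).coeff k • α (n + k) nn w = 0 := by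
    apply Finset.sum_eq_zero
    intro k hk
    rw [Finset.mem_range] at hk
    rw [hcoeff, if_neg (by omega), zero_smul]
  rw [h1, zero_add, Finset.sum_map]
  refine Finset.sum_congr rfl fun k _ => ?_
  simp only [addLeftEmbedding_apply]
  rw [hcoeff, if_pos (by omega)]
  congr 2
  · omega
  · push_cast; ring

/-- `Ē(W,r) = Ẽ(W,r) ⊕ Ē₀(W,r)`: every `α ∈ Ē(W,r)` decomposes as a sum
of an element of `Ẽ(W,r)` and an element of `Ē₀(W,r)`, and the sum is direct. -/
theorem stmt13 :
    (∀ α : SeriesOp W r, MemEbar α →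
      ∃ β γ : SeriesOp W r, MemEtilde β ∧ MemE0 γ ∧ α = β + γ) ∧
    ∀ β γ : SeriesOp W r, MemEtilde β → MemE0 γ → β + γ = 0 → β = 0 ∧ γ = 0 := by
  constructor
  · rintro α ⟨p₀, p, hp₀, hpmf, hE, hann⟩
    obtain ⟨f, hfe, hfnd⟩ := p₀.exists_eq_pow_rootMultiplicity_mul_and_not_dvd hp₀ 0
    rw [Polynomial.C_0, sub_zero] at hfe hfnd
    set m := p₀.rootMultiplicity 0 with hm
    have hf0 : f.coeff 0 ≠ 0 := fun h => hfnd (Polynomial.X_dvd_iff.mpr h)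
    have hf : f ≠ 0 := fun h => hf0 (by simp [h])
    have hfE : ∀ w : W, ∃ N : ℤ, ∀ n ≥ N, ∀ nn, pmul0 f α n nn w = 0 := by
      intro w
      obtain ⟨N, hN⟩ := hE w
      refine ⟨N + m, fun n hn nn => ?_⟩
      have h1 := hN (n - m) (by omega) nn
      rw [hfe, pmul0_Xpow_mul m f hf] at h1
      rwa [show n - (m : ℤ) + m = n by ring] at h1
    set β := psi f α with hβ
    have hβval : ∀ (n : ℤ) nn w, β n nn w
        = psum ((f : PowerSeries ℂ)⁻¹) (fun j => pmul0 f α j nn w) n :=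
      fun _ _ _ => rfl
    have hffinv : (↑f : PowerSeries ℂ) * (↑f : PowerSeries ℂ)⁻¹ = 1 := by
      apply PowerSeries.mul_inv_cancel
      rwa [← PowerSeries.coeff_zero_eq_constantCoeff_apply, Polynomial.coeff_coe]
    have hβE : MemE β := by
      intro w
      obtain ⟨N, hN⟩ := hfE w
      refine ⟨N, fun n hn nn => ?_⟩
      rw [hβval, psum_eq_sum _ _ (fun t ht => hN t ht nn) n (M := (N - n).toNat) le_rfl]
      apply Finset.sum_eq_zero
      intro i _
      rw [hN _ (by omega) nn, smul_zero]
    have hkey : ∀ (n : ℤ) nn w, pmul0 f β n nn w = pmul0 f α n nn w := by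
      intro n nn w
      obtain ⟨N, hN⟩ := hfE w
      rw [pmul0_eq_psum]
      have h2 : (fun j => β j nn w)
          = fun t => psum ((f : PowerSeries ℂ)⁻¹) (fun j => pmul0 f α j nn w) t :=
        funext fun j => hβval j nn w
      rw [h2, psum_assoc _ _ _ (fun t ht => hN t ht nn) n, hffinv, psum_one]
    have hβann : ∀ i (n : ℤ) nn w, pmuli i (p i) β n nn w = 0 := by
      intro i n nn w
      obtain ⟨N, hN⟩ := hfE w
      have expand : ∀ nn', β n nn' w = ∑ j ∈ Finset.range (N - n).toNat,
          (PowerSeries.coeff j ((f : PowerSeries ℂ)⁻¹)) • pmul0 f α (n + j) nn' w :=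
        fun nn' => by rw [hβval, psum_eq_sum _ _ (fun t ht => hN t ht nn') n le_rfl]
      rw [pmuli]
      calc (∑ k ∈ Finset.range ((p i).natDegree + 1),
              (p i).coeff k • β n (Function.update nn i (nn i + k)) w)
          = ∑ k ∈ Finset.range ((p i).natDegree + 1), ∑ j ∈ Finset.range (N - n).toNat,
              (p i).coeff k • (PowerSeries.coeff j ((f : PowerSeries ℂ)⁻¹))
                • pmul0 f α (n + j) (Function.update nn i (nn i + k)) w := by
            refine Finset.sum_congr rfl fun k _ => ?_
            rw [expand, Finset.smul_sum]
        _ = ∑ j ∈ Finset.range (N - n).toNat,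
              (PowerSeries.coeff j ((f : PowerSeries ℂ)⁻¹)) •
                pmuli i (p i) (pmul0 f α) (n + j) nn w := by
            rw [Finset.sum_comm]
            refine Finset.sum_congr rfl fun j _ => ?_
            rw [pmuli, Finset.smul_sum]
            exact Finset.sum_congr rfl fun k _ => smul_comm _ _ _
        _ = 0 := by
            apply Finset.sum_eq_zero
            intro j _
            rw [pmuli_pmul0]
            have h0 : pmul0 f (pmuli i (p i) α) (n + j) nn w = 0 := by
              rw [pmul0]
              exact Finset.sum_eq_zero fun l _ => by rw [hann, smul_zero]
            rw [h0, smul_zero]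
    refine ⟨β, α - β, ⟨hβE, p, hpmf, hβann⟩, ⟨f, p, hf, hpmf, ?_, ?_⟩, by abel⟩
    · intro n nn w
      have hsub : pmul0 f (α - β) n nn w = pmul0 f α n nn w - pmul0 f β n nn w := by
        simp [pmul0, smul_sub, Finset.sum_sub_distrib]
      rw [hsub, hkey, sub_self]
    · intro i n nn w
      have hsub : pmuli i (p i) (α - β) n nn w
          = pmuli i (p i) α n nn w - pmuli i (p i) β n nn w := by
        simp [pmuli, smul_sub, Finset.sum_sub_distrib]
      rw [hsub, hann, hβann, sub_self]
  · rintro β γ ⟨hβE, -⟩ ⟨q₀, q, hq₀, -, hq0ann, -⟩ hsum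
    have hγval : ∀ (n : ℤ) nn w, γ n nn w = -β n nn w := by
      intro n nn w
      have h1 := congrFun (congrFun (congrFun hsum n) nn) w
      simp only [Pi.add_apply, Pi.zero_apply] at h1
      exact eq_neg_of_add_eq_zero_right h1
    have hqβ : ∀ (n : ℤ) nn w, pmul0 q₀ β n nn w = 0 := by
      intro n nn w
      have h1 : pmul0 q₀ β n nn w = -pmul0 q₀ γ n nn w := by
        rw [pmul0, pmul0, ← Finset.sum_neg_distrib]
        refine Finset.sum_congr rfl fun k _ => ?_
        rw [hγval, smul_neg, neg_neg]
      rw [h1, hq0ann, neg_zero]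
    have hβ0 : ∀ (n : ℤ) nn w, β n nn w = 0 := by
      intro n nn w
      obtain ⟨N, hN⟩ := hβE w
      set d := q₀.natTrailingDegree with hd
      have hqm : q₀.coeff d ≠ 0 := by
        have h2 := Polynomial.trailingCoeff_nonzero_iff_nonzero.mpr hq₀
        rwa [Polynomial.trailingCoeff] at h2
      have hmle : d ≤ q₀.natDegree := q₀.natTrailingDegree_le_natDegree
      have main : ∀ j : ℕ, ∀ n' : ℤ, N - j ≤ n' → β n' nn w = 0 := by
        intro j
        induction j with
        | zero => intro n' h; exact hN n' (by omega) nn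
        | succ j ih =>
          intro n' h
          by_cases hc : N - j ≤ n'
          · exact ih n' hc
          push_neg at hc
          have hrel := hqβ (n' - d) nn w
          rw [pmul0, ← Finset.add_sum_erase _ _ (a := d) (Finset.mem_range.mpr (by omega))] at hrel
          have hz : ∑ k ∈ (Finset.range (q₀.natDegree + 1)).erase d,
              q₀.coeff k • β (n' - d + k) nn w = 0 := by
            apply Finset.sum_eq_zero
            intro k hk
            rw [Finset.mem_erase, Finset.mem_range] at hk
            rcases lt_or_gt_of_ne hk.1 with hlt | hgt
            · rw [Polynomial.coeff_eq_zero_of_lt_natTrailingDegree hlt, zero_smul]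
            · rw [ih (n' - d + k) (by omega), smul_zero]
          rw [hz, add_zero, show n' - (d : ℤ) + d = n' by ring] at hrel
          have h3 : β n' nn w = (q₀.coeff d)⁻¹ • (q₀.coeff d • β n' nn w) := by
            rw [smul_smul, inv_mul_cancel₀ hqm, one_smul]
          rw [h3, hrel, smul_zero]
      exact main (N - n).toNat n (by omega)
    constructor
    · funext n nn w
      exact hβ0 n nn w
    · funext n nn w
      show γ n nn w = 0
      rw [hγval, hβ0, neg_zero]
end
end

section
/- With notation as in the decomposition Ē(W,r) = Ẽ(W,r) ⊕ Ē₀(W,r), the linear map ψ defined by ψ(α)w = ι_{x₀;0}(f(x₀)⁻¹)(f(x₀)α(x₀,x̄)w) is well-defined (independent of the choice of f), restricts to the identity on Ẽ(W,r), and vanishes on Ē₀(W,r). -/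
noncomputable section

variable {W : Type*} [AddCommGroup W] [Module ℂ W] {r : ℕ}

section Stmt14Aux

lemma stmt14_sum_swap_smul (c d : ℕ → ℂ) (b : ℤ → W) (n₀ : ℤ) (S T : Finset ℕ) :
    ∑ k ∈ S, c k • ∑ i ∈ T, d i • b (n₀ + k + i)
      = ∑ i ∈ T, d i • ∑ k ∈ S, c k • b (n₀ + i + k) := by
  simp only [Finset.smul_sum]
  rw [Finset.sum_comm]
  refine Finset.sum_congr rfl fun i _ => Finset.sum_congr rfl fun k _ => ?_
  have h : n₀ + (k : ℤ) + i = n₀ + i + k := by ring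
  rw [h, smul_comm]

lemma stmt14_pmul0_comm (p q : Polynomial ℂ) (α : SeriesOp W r) (n₀ : ℤ)
    (nn : Fin r → ℤ) (w : W) :
    pmul0 p (pmul0 q α) n₀ nn w = pmul0 q (pmul0 p α) n₀ nn w := by
  simpa [pmul0] using
    stmt14_sum_swap_smul (fun k => p.coeff k) (fun k => q.coeff k) (fun m => α m nn w) n₀
      (Finset.range (p.natDegree + 1)) (Finset.range (q.natDegree + 1))

/-- If `b` is lower truncated and killed by a nonzero polynomial in the shift, it vanishes. -/
lemma stmt14_keyL (p : Polynomial ℂ) (hp : p ≠ 0) (b : ℤ → W) (N : ℤ)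
    (hb : ∀ m ≥ N, b m = 0)
    (hrel : ∀ n₀ : ℤ, ∑ k ∈ Finset.range (p.natDegree + 1), p.coeff k • b (n₀ + k) = 0) :
    ∀ m, b m = 0 := by
  set j := p.natTrailingDegree with hjdef
  have hj : p.coeff j ≠ 0 := by
    have h2 : p.trailingCoeff ≠ 0 := mt Polynomial.trailingCoeff_eq_zero.mp hp
    exact h2
  have hjle : j ≤ p.natDegree := p.natTrailingDegree_le_natDegree
  have key : ∀ t : ℕ, ∀ m : ℤ, N ≤ m + t → b m = 0 := by
    intro t
    induction t with
    | zero => intro m hm; exact hb m (by simpa using hm)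
    | succ t ih =>
      intro m hm
      by_cases h : N ≤ m
      · exact hb m h
      · have hrel' := hrel (m - j)
        rw [Finset.sum_eq_single j] at hrel'
        · have hmm : m - (j : ℤ) + j = m := by ring
          rw [hmm] at hrel'
          have := congrArg (fun x => (p.coeff j)⁻¹ • x) hrel'
          simpa [smul_smul, inv_mul_cancel₀ hj] using this
        · intro k hk hkj
          rcases lt_or_gt_of_ne hkj with hlt | hgt
          · rw [Polynomial.coeff_eq_zero_of_lt_natTrailingDegree hlt, zero_smul]
          · rw [ih (m - j + k) (by omega), smul_zero]
        · intro hjmem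
          exact absurd (Finset.mem_range.mpr (by omega)) hjmem
  intro m
  exact key (N - m).toNat m (by omega)

/-- Under the truncation hypothesis, the `finsum` in `psi` is a finite sum. -/
lemma stmt14_psi_eq_sum (f : Polynomial ℂ) (α : SeriesOp W r) (w : W) (N : ℤ)
    (hN : ∀ n₀ ≥ N, ∀ nn, pmul0 f α n₀ nn w = 0) (n₀ : ℤ) (nn : Fin r → ℤ)
    (T : ℕ) (hT : N ≤ n₀ + T) :
    psi f α n₀ nn w = ∑ i ∈ Finset.range T,
      (PowerSeries.coeff i ((f : PowerSeries ℂ)⁻¹)) • pmul0 f α (n₀ + i) nn w := by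
  apply finsum_eq_sum_of_support_subset
  intro i hi
  rw [Function.mem_support] at hi
  rw [Finset.coe_range, Set.mem_Iio]
  by_contra h
  push_neg at h
  exact hi (by rw [hN (n₀ + i) (by push_cast; omega) nn, smul_zero])

lemma stmt14_shift_sum (s : PowerSeries ℂ) (k : ℕ) (b : ℤ → W) (n₀ : ℤ) (N : ℤ)
    (hb : ∀ m ≥ N, b m = 0) (T : ℕ) (hT : N ≤ n₀ + T) :
    ∑ i ∈ Finset.range T,
        (PowerSeries.coeff i ((PowerSeries.X : PowerSeries ℂ) ^ k * s)) • b (n₀ + i)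
      = ∑ i ∈ Finset.range T, (PowerSeries.coeff i s) • b (n₀ + k + i) := by
  have hA1 : ∑ i ∈ Finset.range (T + k),
      (PowerSeries.coeff i ((PowerSeries.X : PowerSeries ℂ) ^ k * s)) • b (n₀ + i)
      = ∑ i ∈ Finset.range T,
        (PowerSeries.coeff i ((PowerSeries.X : PowerSeries ℂ) ^ k * s)) • b (n₀ + i) := by
    rw [Finset.sum_range_add]
    have : ∀ i ∈ Finset.range k,
        (PowerSeries.coeff (T + i) ((PowerSeries.X : PowerSeries ℂ) ^ k * s)) •
          b (n₀ + ((T + i : ℕ) : ℤ)) = 0 := by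
      intro i _
      rw [hb (n₀ + ((T + i : ℕ) : ℤ)) (by push_cast; omega), smul_zero]
    rw [Finset.sum_congr rfl this, Finset.sum_const_zero, add_zero]
  have hA2 : ∑ i ∈ Finset.range (k + T),
      (PowerSeries.coeff i ((PowerSeries.X : PowerSeries ℂ) ^ k * s)) • b (n₀ + i)
      = ∑ i ∈ Finset.range T, (PowerSeries.coeff i s) • b (n₀ + k + i) := by
    rw [Finset.sum_range_add]
    have h1 : ∀ i ∈ Finset.range k,
        (PowerSeries.coeff i ((PowerSeries.X : PowerSeries ℂ) ^ k * s)) • b (n₀ + i) = 0 := by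
      intro i hi
      rw [PowerSeries.coeff_X_pow_mul' s k i, if_neg (by simp at hi; omega), zero_smul]
    have h2 : ∀ i ∈ Finset.range T,
        (PowerSeries.coeff (k + i) ((PowerSeries.X : PowerSeries ℂ) ^ k * s)) •
            b (n₀ + ((k + i : ℕ) : ℤ))
          = (PowerSeries.coeff i s) • b (n₀ + k + i) := by
      intro i _
      rw [add_comm k i, PowerSeries.coeff_X_pow_mul s k i]
      congr 1
      push_cast; ring
    rw [Finset.sum_congr rfl h1, Finset.sum_congr rfl h2, Finset.sum_const_zero, zero_add]
  rw [← hA1, show T + k = k + T by omega, hA2]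

lemma stmt14_coeff_coe_mul (f : Polynomial ℂ) (s : PowerSeries ℂ) (i : ℕ) :
    PowerSeries.coeff i ((f : PowerSeries ℂ) * s)
      = ∑ k ∈ Finset.range (f.natDegree + 1),
          f.coeff k * PowerSeries.coeff i ((PowerSeries.X : PowerSeries ℂ) ^ k * s) := by
  rw [← Polynomial.eval₂_C_X_eq_coe, Polynomial.eval₂_eq_sum_range, Finset.sum_mul, map_sum]
  refine Finset.sum_congr rfl fun k _ => ?_
  rw [mul_assoc, PowerSeries.coeff_C_mul]

/-- The key cancellation `f · ι(1/f) · (fα) = fα`. -/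
lemma stmt14_cancel (f : Polynomial ℂ) (hf : f.coeff 0 ≠ 0) (b : ℤ → W) (N : ℤ)
    (hb : ∀ m ≥ N, b m = 0) (n₀ : ℤ) (T : ℕ) (hT : N ≤ n₀ + T) :
    ∑ k ∈ Finset.range (f.natDegree + 1), f.coeff k •
      ∑ i ∈ Finset.range T, (PowerSeries.coeff i ((f : PowerSeries ℂ)⁻¹)) • b (n₀ + k + i)
      = b n₀ := by
  set s : PowerSeries ℂ := ((f : PowerSeries ℂ))⁻¹ with hs
  have step1 : ∀ k ∈ Finset.range (f.natDegree + 1),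
      f.coeff k • ∑ i ∈ Finset.range T, (PowerSeries.coeff i s) • b (n₀ + k + i)
        = f.coeff k • ∑ i ∈ Finset.range T,
            (PowerSeries.coeff i ((PowerSeries.X : PowerSeries ℂ) ^ k * s)) • b (n₀ + i) := by
    intro k _
    rw [stmt14_shift_sum s k b n₀ N hb T hT]
  rw [Finset.sum_congr rfl step1]
  have swap : ∑ k ∈ Finset.range (f.natDegree + 1), f.coeff k •
      ∑ i ∈ Finset.range T,
        (PowerSeries.coeff i ((PowerSeries.X : PowerSeries ℂ) ^ k * s)) • b (n₀ + i)
      = ∑ i ∈ Finset.range T, (∑ k ∈ Finset.range (f.natDegree + 1),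
          f.coeff k * PowerSeries.coeff i ((PowerSeries.X : PowerSeries ℂ) ^ k * s)) •
            b (n₀ + i) := by
    simp only [Finset.smul_sum, Finset.sum_smul]
    rw [Finset.sum_comm]
    exact Finset.sum_congr rfl fun i _ => Finset.sum_congr rfl fun k _ => (smul_smul _ _ _)
  rw [swap]
  have hone : (f : PowerSeries ℂ) * s = 1 :=
    PowerSeries.mul_inv_cancel _ (by rwa [Polynomial.constantCoeff_coe])
  have : ∀ i ∈ Finset.range T,
      (∑ k ∈ Finset.range (f.natDegree + 1),
          f.coeff k * PowerSeries.coeff i ((PowerSeries.X : PowerSeries ℂ) ^ k * s)) •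
            b (n₀ + i)
        = (if i = 0 then (1 : ℂ) else 0) • b (n₀ + i) := by
    intro i _
    rw [← stmt14_coeff_coe_mul, hone]
    congr 1
    simp [PowerSeries.coeff_one]
  rw [Finset.sum_congr rfl this]
  simp only [ite_smul, one_smul, zero_smul]
  rw [Finset.sum_ite_eq' (Finset.range T) 0 (fun i => b (n₀ + i))]
  by_cases hT0 : 0 < T
  · rw [if_pos (Finset.mem_range.mpr hT0)]
    norm_num
  · rw [if_neg (by simp; omega)]
    rw [hb n₀ (by omega)]

lemma stmt14_memE_psi (f : Polynomial ℂ) (α : SeriesOp W r) (h : MemE (pmul0 f α)) :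
    MemE (psi f α) := by
  intro w
  obtain ⟨N, hN⟩ := h w
  refine ⟨N, fun n₀ hn nn => ?_⟩
  exact finsum_eq_zero_of_forall_eq_zero fun i => by
    rw [hN (n₀ + i) (by push_cast; omega) nn, smul_zero]

lemma stmt14_memE_pmul0 (p : Polynomial ℂ) (β : SeriesOp W r) (h : MemE β) :
    MemE (pmul0 p β) := by
  intro w
  obtain ⟨N, hN⟩ := h w
  refine ⟨N, fun n₀ hn nn => Finset.sum_eq_zero fun k _ => ?_⟩
  rw [hN (n₀ + k) (by push_cast; omega) nn, smul_zero]

/-- `f(x₀) ψ_f(α) = f(x₀) α` pointwise. -/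
lemma stmt14_pmul0_psi (f : Polynomial ℂ) (α : SeriesOp W r) (hf : f.coeff 0 ≠ 0)
    (hE : MemE (pmul0 f α)) :
    pmul0 f (psi f α) = pmul0 f α := by
  funext n₀ nn w
  obtain ⟨N, hN⟩ := hE w
  set T : ℕ := (N - n₀).toNat with hTdef
  have hT : N ≤ n₀ + (T : ℤ) := by omega
  have expand : ∀ k ∈ Finset.range (f.natDegree + 1),
      f.coeff k • psi f α (n₀ + k) nn w
        = f.coeff k • ∑ i ∈ Finset.range T,
            (PowerSeries.coeff i ((f : PowerSeries ℂ)⁻¹)) • pmul0 f α (n₀ + k + i) nn w := by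
    intro k _
    rw [stmt14_psi_eq_sum f α w N hN (n₀ + k) nn T (by push_cast; omega)]
  calc pmul0 f (psi f α) n₀ nn w
      = ∑ k ∈ Finset.range (f.natDegree + 1), f.coeff k • psi f α (n₀ + k) nn w := rfl
    _ = ∑ k ∈ Finset.range (f.natDegree + 1), f.coeff k •
          ∑ i ∈ Finset.range T,
            (PowerSeries.coeff i ((f : PowerSeries ℂ)⁻¹)) • pmul0 f α (n₀ + k + i) nn w :=
        Finset.sum_congr rfl expand
    _ = pmul0 f α n₀ nn w :=
        stmt14_cancel f hf (fun m => pmul0 f α m nn w) N (fun m hm => hN m hm nn) n₀ T hT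

lemma stmt14_pmul0_sub (p : Polynomial ℂ) (a b : SeriesOp W r) :
    pmul0 p (fun n nn w => a n nn w - b n nn w)
      = fun n nn w => pmul0 p a n nn w - pmul0 p b n nn w := by
  funext n nn w
  simp [pmul0, smul_sub, Finset.sum_sub_distrib]

end Stmt14Aux

/-- the map `ψ(α)w = ι_{x₀;0}(f(x₀)⁻¹)(f(x₀)α(x₀,x̄)w)` on `Ē(W,r)` is
well-defined (independent of the choice of the polynomial `f` with `f(0) ≠ 0` and
`f(x₀)α ∈ E(W,r)`), restricts to the identity on `Ẽ(W,r)`, and vanishes on `Ē₀(W,r)`. -/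

theorem stmt14 (α : SeriesOp W r) (hα : MemEbar α) :
    (∀ f g : Polynomial ℂ, f.coeff 0 ≠ 0 → g.coeff 0 ≠ 0 →
      MemE (pmul0 f α) → MemE (pmul0 g α) → psi f α = psi g α) ∧
    ∀ f : Polynomial ℂ, f.coeff 0 ≠ 0 → MemE (pmul0 f α) →
      (MemEtilde α → psi f α = α) ∧ (MemE0 α → psi f α = 0) := by
  constructor
  · -- well-definedness
    intro f g hf hg hEf hEg
    have hf0 : f ≠ 0 := fun h => hf (by simp [h])
    have hg0 : g ≠ 0 := fun h => hg (by simp [h])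
    set δ : SeriesOp W r := fun n nn w => psi f α n nn w - psi g α n nn w with hδ
    have hδE : MemE δ := by
      intro w
      obtain ⟨N1, h1⟩ := stmt14_memE_psi f α hEf w
      obtain ⟨N2, h2⟩ := stmt14_memE_psi g α hEg w
      refine ⟨max N1 N2, fun n₀ hn nn => ?_⟩
      simp only [hδ, h1 n₀ (le_trans (le_max_left _ _) hn) nn,
        h2 n₀ (le_trans (le_max_right _ _) hn) nn, sub_zero]
    have hgδE : MemE (pmul0 g δ) := stmt14_memE_pmul0 g δ hδE
    have hEf' : pmul0 f (psi f α) = pmul0 f α := stmt14_pmul0_psi f α hf hEf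
    have hEg' : pmul0 g (psi g α) = pmul0 g α := stmt14_pmul0_psi g α hg hEg
    have hfg0 : ∀ n₀ nn w, pmul0 f (pmul0 g δ) n₀ nn w = 0 := by
      intro n₀ nn w
      have e1 : pmul0 g δ = fun n nn w =>
          pmul0 g (psi f α) n nn w - pmul0 g (psi g α) n nn w := stmt14_pmul0_sub g _ _
      rw [e1, stmt14_pmul0_sub f _ _]
      have c1 : pmul0 f (pmul0 g (psi f α)) n₀ nn w = pmul0 f (pmul0 g α) n₀ nn w := by
        rw [stmt14_pmul0_comm f g (psi f α) n₀ nn w, hEf',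
          stmt14_pmul0_comm g f α n₀ nn w]
      have c2 : pmul0 f (pmul0 g (psi g α)) n₀ nn w = pmul0 f (pmul0 g α) n₀ nn w := by
        rw [hEg']
      simp only [c1, c2, sub_self]
    have hgδ0 : ∀ n₀ nn w, pmul0 g δ n₀ nn w = 0 := by
      intro n₀ nn w
      obtain ⟨N, hN⟩ := hgδE w
      exact stmt14_keyL f hf0 (fun m => pmul0 g δ m nn w) N (fun m hm => hN m hm nn)
        (fun m => hfg0 m nn w) n₀
    have hδ0 : ∀ n₀ nn w, δ n₀ nn w = 0 := by
      intro n₀ nn w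
      obtain ⟨N, hN⟩ := hδE w
      exact stmt14_keyL g hg0 (fun m => δ m nn w) N (fun m hm => hN m hm nn)
        (fun m => hgδ0 m nn w) n₀
    funext n₀ nn w
    have := hδ0 n₀ nn w
    simpa [hδ, sub_eq_zero] using this
  · intro f hf hEf
    have hf0 : f ≠ 0 := fun h => hf (by simp [h])
    have hEf' : pmul0 f (psi f α) = pmul0 f α := stmt14_pmul0_psi f α hf hEf
    constructor
    · -- identity on Ẽ
      rintro ⟨hEα, -⟩
      set δ : SeriesOp W r := fun n nn w => psi f α n nn w - α n nn w with hδ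
      have hδE : MemE δ := by
        intro w
        obtain ⟨N1, h1⟩ := stmt14_memE_psi f α hEf w
        obtain ⟨N2, h2⟩ := hEα w
        refine ⟨max N1 N2, fun n₀ hn nn => ?_⟩
        simp only [hδ, h1 n₀ (le_trans (le_max_left _ _) hn) nn,
          h2 n₀ (le_trans (le_max_right _ _) hn) nn, sub_zero]
      have hfδ0 : ∀ n₀ nn w, pmul0 f δ n₀ nn w = 0 := by
        intro n₀ nn w
        rw [hδ, stmt14_pmul0_sub f _ _]
        simp only [hEf', sub_self]
      have hδ0 : ∀ n₀ nn w, δ n₀ nn w = 0 := by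
        intro n₀ nn w
        obtain ⟨N, hN⟩ := hδE w
        exact stmt14_keyL f hf0 (fun m => δ m nn w) N (fun m hm => hN m hm nn)
          (fun m => hfδ0 m nn w) n₀
      funext n₀ nn w
      have := hδ0 n₀ nn w
      simpa [hδ, sub_eq_zero] using this
    · -- vanishing on Ē₀
      rintro ⟨p₀, p, hp₀, -, hz, -⟩
      have hψ0 : ∀ n₀ nn w, pmul0 p₀ (psi f α) n₀ nn w = 0 := by
        intro n₀ nn w
        obtain ⟨N, hN⟩ := hEf w
        set T : ℕ := (N - n₀).toNat with hTdef
        have expand : ∀ k ∈ Finset.range (p₀.natDegree + 1),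
            p₀.coeff k • psi f α (n₀ + k) nn w
              = p₀.coeff k • ∑ i ∈ Finset.range T,
                  (PowerSeries.coeff i ((f : PowerSeries ℂ)⁻¹)) •
                    pmul0 f α (n₀ + k + i) nn w := by
          intro k _
          rw [stmt14_psi_eq_sum f α w N hN (n₀ + k) nn T (by push_cast; omega)]
        calc pmul0 p₀ (psi f α) n₀ nn w
            = ∑ k ∈ Finset.range (p₀.natDegree + 1), p₀.coeff k • psi f α (n₀ + k) nn w := rfl
          _ = ∑ k ∈ Finset.range (p₀.natDegree + 1), p₀.coeff k •
                ∑ i ∈ Finset.range T,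
                  (PowerSeries.coeff i ((f : PowerSeries ℂ)⁻¹)) •
                    pmul0 f α (n₀ + k + i) nn w := Finset.sum_congr rfl expand
          _ = ∑ i ∈ Finset.range T,
                (PowerSeries.coeff i ((f : PowerSeries ℂ)⁻¹)) •
                  ∑ k ∈ Finset.range (p₀.natDegree + 1),
                    p₀.coeff k • pmul0 f α (n₀ + i + k) nn w :=
              stmt14_sum_swap_smul (fun k => p₀.coeff k)
                (fun i => PowerSeries.coeff i ((f : PowerSeries ℂ)⁻¹))
                (fun m => pmul0 f α m nn w) n₀ _ _
          _ = 0 := by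
              refine Finset.sum_eq_zero fun i _ => ?_
              have : ∑ k ∈ Finset.range (p₀.natDegree + 1),
                  p₀.coeff k • pmul0 f α (n₀ + i + k) nn w
                    = pmul0 f (pmul0 p₀ α) (n₀ + i) nn w := by
                rw [← stmt14_pmul0_comm p₀ f α (n₀ + i) nn w]
                rfl
              rw [this]
              have hz' : pmul0 f (pmul0 p₀ α) (n₀ + i) nn w = 0 := by
                refine Finset.sum_eq_zero fun k _ => ?_
                rw [hz (n₀ + i + k) nn w, smul_zero]
              rw [hz', smul_zero]
      have hψE : MemE (psi f α) := stmt14_memE_psi f α hEf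
      funext n₀ nn w
      obtain ⟨N, hN⟩ := hψE w
      have := stmt14_keyL p₀ hp₀ (fun m => psi f α m nn w) N (fun m hm => hN m hm nn)
        (fun m => hψ0 m nn w) n₀
      simpa using this
end
end
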